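/- arXiv:2011.02074 — 3 statements merged into one kernel-verified Lean document; each statement's English description precedes it below -/
import Mathlib

section
/- Let N ≥ 3, μ₀ = -(N-2)²/4 ≤ μ₁ < 0 ≤ μ₂, and p, q > 1 satisfy q < (N + τ₊(μ₂))/(-τ₊(μ₁)) and q > 2/(-τ₊(μ₁)) and τ₊(μ₁)(pq - 1) + 2p + 2 > 0. Set τ₂ = q·τ₊(μ₁) + 2 and τ₁ = p·τ₂ + 2. Then τ₋(μ₂) < τ₂ < τ₊(μ₂) and τ₁ > τ₊(μ₁). -/
theorem stmt_12 (N : ℕ) (hN : 3 ≤ N) (μ₁ μ₂ : ℝ)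
    (hμ₁ : -(((N:ℝ) - 2)^2 / 4) ≤ μ₁) (hμ₁' : μ₁ < 0) (hμ₂ : 0 ≤ μ₂)
    (τp1 τp2 τm2 : ℝ)
    (hτp1 : τp1 = -((N:ℝ) - 2) / 2 + Real.sqrt (μ₁ + ((N:ℝ) - 2)^2 / 4))
    (hτp2 : τp2 = -((N:ℝ) - 2) / 2 + Real.sqrt (μ₂ + ((N:ℝ) - 2)^2 / 4))
    (hτm2 : τm2 = -((N:ℝ) - 2) / 2 - Real.sqrt (μ₂ + ((N:ℝ) - 2)^2 / 4))
    (p q : ℝ) (hp : 1 < p) (hq : 1 < q)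
    (hq1 : q < ((N:ℝ) + τp2) / (-τp1)) (hq2 : 2 / (-τp1) < q)
    (hc : 0 < τp1 * (p * q - 1) + 2 * p + 2)
    (τ1 τ2 : ℝ) (hτ2 : τ2 = q * τp1 + 2) (hτ1 : τ1 = p * τ2 + 2) :
    τm2 < τ2 ∧ τ2 < τp2 ∧ τp1 < τ1 := by
  have hN3 : (3:ℝ) ≤ (N:ℝ) := by exact_mod_cast hN
  have ha : (0:ℝ) ≤ ((N:ℝ) - 2) / 2 := by linarith
  have hsqA : Real.sqrt (((N:ℝ) - 2)^2 / 4) = ((N:ℝ) - 2) / 2 := by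
    rw [show ((N:ℝ) - 2)^2 / 4 = (((N:ℝ) - 2)/2)^2 by ring, Real.sqrt_sq ha]
  -- τp1 < 0
  have h1lt : Real.sqrt (μ₁ + ((N:ℝ) - 2)^2 / 4) < ((N:ℝ) - 2) / 2 := by
    calc Real.sqrt (μ₁ + ((N:ℝ) - 2)^2 / 4)
        < Real.sqrt (((N:ℝ) - 2)^2 / 4) :=
          Real.sqrt_lt_sqrt (by linarith) (by linarith)
      _ = ((N:ℝ) - 2) / 2 := hsqA
  have hτp1neg : τp1 < 0 := by rw [hτp1]; linarith
  have hpos : 0 < -τp1 := by linarith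
  -- 0 ≤ τp2
  have h2ge : ((N:ℝ) - 2) / 2 ≤ Real.sqrt (μ₂ + ((N:ℝ) - 2)^2 / 4) := by
    calc ((N:ℝ) - 2) / 2 = Real.sqrt (((N:ℝ) - 2)^2 / 4) := hsqA.symm
      _ ≤ Real.sqrt (μ₂ + ((N:ℝ) - 2)^2 / 4) := Real.sqrt_le_sqrt (by linarith)
  have hτp2nn : 0 ≤ τp2 := by rw [hτp2]; linarith
  have h1 : q * (-τp1) < (N:ℝ) + τp2 := (lt_div_iff₀ hpos).mp hq1
  have h2 : 2 < q * (-τp1) := (div_lt_iff₀ hpos).mp hq2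
  have hτm2' : τm2 = 2 - (N:ℝ) - τp2 := by rw [hτm2, hτp2]; ring
  have hτ1' : τ1 = p * q * τp1 + 2 * p + 2 := by rw [hτ1, hτ2]; ring
  refine ⟨by rw [hτ2, hτm2']; nlinarith, by nlinarith, by nlinarith⟩
end

section
/- Let N ≥ 3, μ₀ = -(N-2)²/4 ≤ μ₁ < 0 ≤ μ₂ and p, q > 0. There exist positive constants t, c such that the pair (u, v) = (t(|x|^{τ₊(μ₁)} - |x|^{τ₁}), t|x|^{τ₂}), with τ₂ = q·τ₊(μ₁)+2 ∈ (τ₋(μ₂), τ₊(μ₂)) and τ₁ = p·τ₂+2 > τ₊(μ₁), satisfies -Δu + μ₁|x|^{-2}u ≥ v^p and -Δv + μ₂|x|^{-2}v ≥ u^q pointwise on B₁(0) \ {0}, provided 2/(-τ₊(μ₁)) < q < (N+τ₊(μ₂))/(-τ₊(μ₁)) and τ₊(μ₁)(pq-1)+2p+2 > 0 and p, q > 1. -/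
/-!
On powers of `r = ‖x‖` the operator `-Δ + μ r⁻²` acts diagonally: it sends `r ^ τ` to
`(μ - τ (τ + N - 2)) r ^ (τ - 2)`, and `τ (τ + N - 2) - μ = (τ - τ₊(μ)) (τ - τ₋(μ))`.
So `r ^ τ₊(μ₁)` is annihilated, while `r ^ τ₁` (with `τ₁ > τ₊(μ₁)`) and `r ^ τ₂` (with `τ₂` between
the roots for `μ₂`) come with positive coefficients `C₁`, `C₂`. As `τ₁ - 2 = p τ₂` and
`τ₂ - 2 = q τ₊(μ₁)`, and `0 ≤ u ≤ t r ^ τ₊(μ₁)` for `r < 1`, both inequalities reduce to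
`t ^ p ≤ C₁ t` and `t ^ q ≤ C₂ t`, which hold for small `t > 0` because `p, q > 1`.
-/

noncomputable def lap (N : ℕ) (u : EuclideanSpace ℝ (Fin N) → ℝ)
    (x : EuclideanSpace ℝ (Fin N)) : ℝ :=
  ∑ i : Fin N, fderiv ℝ (fun y => fderiv ℝ u y (EuclideanSpace.single i 1)) x
    (EuclideanSpace.single i 1)

open Real Filter Topology

theorem indicial_factor {d μ : ℝ} (h : 0 ≤ μ + d ^ 2 / 4) (τ : ℝ) :
    τ * (τ + d) - μ =
      (τ - (-d / 2 + √(μ + d ^ 2 / 4))) * (τ - (-d / 2 - √(μ + d ^ 2 / 4))) := by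
  linear_combination sq_sqrt h

theorem indicial_root {d μ : ℝ} (h : 0 ≤ μ + d ^ 2 / 4) :
    μ - (-d / 2 + √(μ + d ^ 2 / 4)) * (-d / 2 + √(μ + d ^ 2 / 4) + d) = 0 := by
  rw [← neg_sub, indicial_factor h, sub_self, zero_mul, neg_zero]

theorem lt_indicial_of_root_lt {d μ τ : ℝ} (h : 0 ≤ μ + d ^ 2 / 4)
    (hτ : -d / 2 + √(μ + d ^ 2 / 4) < τ) : μ < τ * (τ + d) := by
  have := sqrt_nonneg (μ + d ^ 2 / 4)
  rw [← sub_pos, indicial_factor h]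
  exact mul_pos (by linarith) (by linarith)

theorem indicial_lt_of_between_roots {d μ τ : ℝ} (h : 0 ≤ μ + d ^ 2 / 4)
    (hlo : -d / 2 - √(μ + d ^ 2 / 4) < τ) (hhi : τ < -d / 2 + √(μ + d ^ 2 / 4)) :
    τ * (τ + d) < μ := by
  rw [← sub_neg, indicial_factor h]
  exact mul_neg_of_neg_of_pos (by linarith) (by linarith)

theorem eventually_rpow_le_mul {p C : ℝ} (hp : 1 < p) (hC : 0 < C) :
    ∀ᶠ t in 𝓝[>] 0, t ^ p ≤ t * C := by
  have hlim : Tendsto (fun t : ℝ ↦ t ^ (p - 1)) (𝓝 0) (𝓝 0) := by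
    simpa [zero_rpow (sub_pos.2 hp).ne'] using
      (continuousAt_rpow_const 0 (p - 1) (Or.inr (sub_pos.2 hp).le)).tendsto
  filter_upwards [nhdsWithin_le_nhds (hlim.eventually (gt_mem_nhds hC)), self_mem_nhdsWithin]
    with t htC ht
  calc t ^ p = t * t ^ (p - 1) := by
        rw [← rpow_one_add' ht.le (by linarith)]; ring_nf
    _ ≤ t * C := mul_le_mul_of_nonneg_left htC.le ht.le

theorem hasFDerivAt_norm_rpow_of_ne_zero {E : Type*} [NormedAddCommGroup E] [InnerProductSpace ℝ E]
    {x : E} (hx : x ≠ 0) (τ : ℝ) :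
    HasFDerivAt (fun y : E ↦ ‖y‖ ^ τ) ((τ * ‖x‖ ^ (τ - 2)) • innerSL ℝ x) x := by
  apply HasStrictFDerivAt.hasFDerivAt
  convert! (hasStrictFDerivAt_norm_sq x).rpow_const (p := τ / 2) (by simp [hx]) using 0
  simp_rw [← rpow_natCast_mul (norm_nonneg _), ← Nat.cast_smul_eq_nsmul ℝ, smul_smul]
  ring_nf

section

variable {N : ℕ} {x : EuclideanSpace ℝ (Fin N)}

theorem contDiffAt_norm_rpow (hx : x ≠ 0) (τ : ℝ) :
    ContDiffAt ℝ 2 (fun y : EuclideanSpace ℝ (Fin N) ↦ ‖y‖ ^ τ) x :=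
  (contDiffAt_norm ℝ hx).rpow_const_of_ne (norm_ne_zero_iff.2 hx)

theorem fderiv_norm_rpow_single (hx : x ≠ 0) (τ : ℝ) (i : Fin N) :
    fderiv ℝ (fun y : EuclideanSpace ℝ (Fin N) ↦ ‖y‖ ^ τ) x (EuclideanSpace.single i 1) =
      τ * ‖x‖ ^ (τ - 2) * x i := by
  simp [(hasFDerivAt_norm_rpow_of_ne_zero hx τ).fderiv, EuclideanSpace.inner_single_right]

end

namespace lap

variable {N : ℕ} {u v : EuclideanSpace ℝ (Fin N) → ℝ} {x : EuclideanSpace ℝ (Fin N)}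

theorem const_mul (c : ℝ) : lap N (fun y ↦ c * u y) x = c * lap N u x := by
  have h : ∀ w : EuclideanSpace ℝ (Fin N) → ℝ, fderiv ℝ (fun y ↦ c * w y) = c • fderiv ℝ w :=
    fun w ↦ fderiv_const_smul_field (f := w) c
  have h' : ∀ e, (fun y ↦ (c • fderiv ℝ u y) e) = fun y ↦ c * fderiv ℝ u y e := fun _ ↦ rfl
  simp only [lap, h, Pi.smul_apply, h', Finset.mul_sum]
  rfl

theorem sub (hu : ContDiffAt ℝ 2 u x) (hv : ContDiffAt ℝ 2 v x) :
    lap N (fun y ↦ u y - v y) x = lap N u x - lap N v x := by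
  have hdiff : ∀ {w : EuclideanSpace ℝ (Fin N) → ℝ}, ContDiffAt ℝ 2 w x →
      ∀ e, DifferentiableAt ℝ (fun y ↦ fderiv ℝ w y e) x := fun hw e ↦
    ((hw.fderiv_right (m := 1) le_rfl).differentiableAt one_ne_zero).clm_apply
      (differentiableAt_const e)
  simp only [lap, ← Finset.sum_sub_distrib]
  refine Finset.sum_congr rfl fun i _ ↦ ?_
  have hev : (fun y ↦ fderiv ℝ (fun y ↦ u y - v y) y (EuclideanSpace.single i 1)) =ᶠ[𝓝 x]
      fun y ↦ fderiv ℝ u y (EuclideanSpace.single i 1) -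
        fderiv ℝ v y (EuclideanSpace.single i 1) := by
    filter_upwards [hu.eventually (by simp), hv.eventually (by simp)] with y huy hvy
    rw [fderiv_fun_sub (huy.differentiableAt two_ne_zero) (hvy.differentiableAt two_ne_zero)]
    rfl
  rw [hev.fderiv_eq, fderiv_fun_sub (hdiff hu _) (hdiff hv _)]
  rfl

theorem norm_rpow (hx : x ≠ 0) (τ : ℝ) :
    lap N (fun y ↦ ‖y‖ ^ τ) x = τ * (τ + (N - 2)) * ‖x‖ ^ (τ - 2) := by
  have hx' : 0 < ‖x‖ := norm_pos_iff.2 hx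
  have hsecond : ∀ i : Fin N,
      fderiv ℝ (fun y ↦ fderiv ℝ (fun z : EuclideanSpace ℝ (Fin N) ↦ ‖z‖ ^ τ) y
          (EuclideanSpace.single i 1)) x (EuclideanSpace.single i 1) =
        τ * (τ - 2) * ‖x‖ ^ (τ - 4) * x i ^ 2 + τ * ‖x‖ ^ (τ - 2) := by
    intro i
    have hev : (fun y ↦ fderiv ℝ (fun z : EuclideanSpace ℝ (Fin N) ↦ ‖z‖ ^ τ) y
        (EuclideanSpace.single i 1)) =ᶠ[𝓝 x] fun y ↦ τ * ‖y‖ ^ (τ - 2) * y i := by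
      filter_upwards [isOpen_compl_singleton.mem_nhds hx] with y hy
      exact fderiv_norm_rpow_single hy τ i
    have hd : HasFDerivAt (fun y : EuclideanSpace ℝ (Fin N) ↦ τ * ‖y‖ ^ (τ - 2) * y i) _ x :=
      ((hasFDerivAt_norm_rpow_of_ne_zero hx (τ - 2)).const_mul τ).fun_mul
        (EuclideanSpace.proj (𝕜 := ℝ) i).hasFDerivAt
    rw [hev.fderiv_eq, hd.fderiv]
    simp [EuclideanSpace.inner_single_right]
    ring_nf
  have hnorm : ∑ i, x i ^ 2 = ‖x‖ ^ 2 := by simp [EuclideanSpace.norm_sq_eq]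
  have hpow : ‖x‖ ^ (τ - 4) * ‖x‖ ^ 2 = ‖x‖ ^ (τ - 2) := by
    rw [← rpow_natCast, ← rpow_add hx']; congr 1; ring
  simp only [lap, hsecond, Finset.sum_add_distrib, ← Finset.mul_sum, hnorm, Finset.sum_const,
    Finset.card_univ, Fintype.card_fin, nsmul_eq_mul]
  linear_combination τ * (τ - 2) * hpow

end lap

noncomputable def hardyOp (N : ℕ) (μ : ℝ) (u : EuclideanSpace ℝ (Fin N) → ℝ)
    (x : EuclideanSpace ℝ (Fin N)) : ℝ :=
  -lap N u x + μ / ‖x‖ ^ 2 * u x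

namespace hardyOp

variable {N : ℕ} {μ : ℝ} {u v : EuclideanSpace ℝ (Fin N) → ℝ} {x : EuclideanSpace ℝ (Fin N)}

theorem const_mul (c : ℝ) : hardyOp N μ (fun y ↦ c * u y) x = c * hardyOp N μ u x := by
  rw [hardyOp, hardyOp, lap.const_mul]; ring

theorem sub (hu : ContDiffAt ℝ 2 u x) (hv : ContDiffAt ℝ 2 v x) :
    hardyOp N μ (fun y ↦ u y - v y) x = hardyOp N μ u x - hardyOp N μ v x := by
  rw [hardyOp, hardyOp, hardyOp, lap.sub hu hv]; ring

theorem norm_rpow (hx : x ≠ 0) (τ : ℝ) :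
    hardyOp N μ (fun y ↦ ‖y‖ ^ τ) x = (μ - τ * (τ + (N - 2))) * ‖x‖ ^ (τ - 2) := by
  have hx' : 0 < ‖x‖ := norm_pos_iff.2 hx
  rw [hardyOp, lap.norm_rpow hx, rpow_sub hx', rpow_two]
  field_simp
  ring

end hardyOp

theorem stmt_14_general (N : ℕ) (μ₁ μ₂ : ℝ)
    (hμ₁ : -(((N:ℝ) - 2)^2 / 4) ≤ μ₁) (hμ₂ : 0 ≤ μ₂)
    (τp1 τp2 τm2 : ℝ)
    (hτp1 : τp1 = -((N:ℝ) - 2) / 2 + Real.sqrt (μ₁ + ((N:ℝ) - 2)^2 / 4))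
    (hτp2 : τp2 = -((N:ℝ) - 2) / 2 + Real.sqrt (μ₂ + ((N:ℝ) - 2)^2 / 4))
    (hτm2 : τm2 = -((N:ℝ) - 2) / 2 - Real.sqrt (μ₂ + ((N:ℝ) - 2)^2 / 4))
    (p q : ℝ) (hp : 1 < p) (hq : 1 < q)
    (τ1 τ2 : ℝ) (hτ2 : τ2 = q * τp1 + 2) (hτ1 : τ1 = p * τ2 + 2)
    (hτ2r : τm2 < τ2 ∧ τ2 < τp2) (hτ1r : τp1 < τ1) :
    ∃ t : ℝ, 0 < t ∧
      ∀ x : EuclideanSpace ℝ (Fin N), x ≠ 0 → ‖x‖ < 1 →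
        (let u : EuclideanSpace ℝ (Fin N) → ℝ :=
            fun y => t * (‖y‖ ^ τp1 - ‖y‖ ^ τ1)
         let v : EuclideanSpace ℝ (Fin N) → ℝ := fun y => t * ‖y‖ ^ τ2
         (v x) ^ p ≤ -lap N u x + μ₁ / ‖x‖^2 * u x ∧
         (u x) ^ q ≤ -lap N v x + μ₂ / ‖x‖^2 * v x) := by
  have h₁ : 0 ≤ μ₁ + ((N:ℝ) - 2) ^ 2 / 4 := by linarith
  have h₂ : 0 ≤ μ₂ + ((N:ℝ) - 2) ^ 2 / 4 := by positivity
  have hτp1_root : μ₁ - τp1 * (τp1 + (N - 2)) = 0 := hτp1 ▸ indicial_root h₁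
  have hC₁ : 0 < τ1 * (τ1 + (N - 2)) - μ₁ :=
    sub_pos.2 (lt_indicial_of_root_lt h₁ (hτp1 ▸ hτ1r))
  have hC₂ : 0 < μ₂ - τ2 * (τ2 + (N - 2)) :=
    sub_pos.2 (indicial_lt_of_between_roots h₂ (hτm2 ▸ hτ2r.1) (hτp2 ▸ hτ2r.2))
  obtain ⟨t, ⟨htp, htq⟩, ht⟩ := ((eventually_rpow_le_mul hp hC₁).and
    (eventually_rpow_le_mul hq hC₂) |>.and self_mem_nhdsWithin).exists
  refine ⟨t, ht, fun x hx hx1 ↦ ⟨?_, ?_⟩⟩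
  · change _ ≤ hardyOp N μ₁ (fun y ↦ t * (‖y‖ ^ τp1 - ‖y‖ ^ τ1)) x
    rw [hardyOp.const_mul, hardyOp.sub (contDiffAt_norm_rpow hx _) (contDiffAt_norm_rpow hx _),
      hardyOp.norm_rpow hx, hardyOp.norm_rpow hx, hτp1_root]
    calc (t * ‖x‖ ^ τ2) ^ p = t ^ p * ‖x‖ ^ (τ1 - 2) := by
          rw [mul_rpow ht.le (by positivity), ← rpow_mul (norm_nonneg x), hτ1]; ring_nf
      _ ≤ t * (τ1 * (τ1 + (N - 2)) - μ₁) * ‖x‖ ^ (τ1 - 2) := by gcongr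
      _ = _ := by ring
  · change _ ≤ hardyOp N μ₂ (fun y ↦ t * ‖y‖ ^ τ2) x
    rw [hardyOp.const_mul, hardyOp.norm_rpow hx]
    have hr1 : ‖x‖ ^ τ1 ≤ ‖x‖ ^ τp1 :=
      rpow_le_rpow_of_exponent_ge (norm_pos_iff.2 hx) hx1.le hτ1r.le
    calc (t * (‖x‖ ^ τp1 - ‖x‖ ^ τ1)) ^ q ≤ (t * ‖x‖ ^ τp1) ^ q := by
          gcongr
          exact sub_le_self _ (by positivity)
      _ = t ^ q * ‖x‖ ^ (τ2 - 2) := by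
          rw [mul_rpow ht.le (by positivity), ← rpow_mul (norm_nonneg x), hτ2]; ring_nf
      _ ≤ t * (μ₂ - τ2 * (τ2 + (N - 2))) * ‖x‖ ^ (τ2 - 2) := by gcongr
      _ = _ := by ring

theorem stmt_14 (N : ℕ) (hN : 3 ≤ N) (μ₁ μ₂ : ℝ)
    (hμ₁ : -(((N:ℝ) - 2)^2 / 4) ≤ μ₁) (hμ₁' : μ₁ < 0) (hμ₂ : 0 ≤ μ₂)
    (τp1 τp2 τm2 : ℝ)
    (hτp1 : τp1 = -((N:ℝ) - 2) / 2 + Real.sqrt (μ₁ + ((N:ℝ) - 2)^2 / 4))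
    (hτp2 : τp2 = -((N:ℝ) - 2) / 2 + Real.sqrt (μ₂ + ((N:ℝ) - 2)^2 / 4))
    (hτm2 : τm2 = -((N:ℝ) - 2) / 2 - Real.sqrt (μ₂ + ((N:ℝ) - 2)^2 / 4))
    (p q : ℝ) (hp : 1 < p) (hq : 1 < q)
    (hq1 : 2 / (-τp1) < q) (hq2 : q < ((N:ℝ) + τp2) / (-τp1))
    (hc : 0 < τp1 * (p * q - 1) + 2 * p + 2)
    (τ1 τ2 : ℝ) (hτ2 : τ2 = q * τp1 + 2) (hτ1 : τ1 = p * τ2 + 2)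
    (hτ2r : τm2 < τ2 ∧ τ2 < τp2) (hτ1r : τp1 < τ1) :
    ∃ t : ℝ, 0 < t ∧
      ∀ x : EuclideanSpace ℝ (Fin N), x ≠ 0 → ‖x‖ < 1 →
        (let u : EuclideanSpace ℝ (Fin N) → ℝ :=
            fun y => t * (‖y‖ ^ τp1 - ‖y‖ ^ τ1)
         let v : EuclideanSpace ℝ (Fin N) → ℝ := fun y => t * ‖y‖ ^ τ2
         (v x) ^ p ≤ -lap N u x + μ₁ / ‖x‖^2 * u x ∧
         (u x) ^ q ≤ -lap N v x + μ₂ / ‖x‖^2 * v x) :=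
  stmt_14_general N μ₁ μ₂ hμ₁ hμ₂ τp1 τp2 τm2 hτp1 hτp2 hτm2 p q hp hq τ1 τ2 hτ2 hτ1 hτ2r hτ1r
end

section
/- Let N ≥ 3 and μ₀ ≤ μ₁, μ₂ < 0 with μ₀ = -(N-2)²/4, and let p, q > 1 satisfy (2-τ₊(μ₂))/(-τ₊(μ₁)) < q < (N+τ₊(μ₂))/(-τ₊(μ₁)) and τ₊(μ₁)(pq-1)+2p+2 > 0. Set τ₂ = q·τ₊(μ₁)+2 and τ₁ = p·τ₂+2. Then τ₋(μ₂) < τ₂ < τ₊(μ₂) and τ₁ > τ₊(μ₁). -/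
theorem stmt_15 (N : ℕ) (hN : 3 ≤ N) (μ₁ μ₂ : ℝ)
    (hμ₁ : -(((N:ℝ) - 2)^2 / 4) ≤ μ₁) (hμ₁' : μ₁ < 0)
    (hμ₂ : -(((N:ℝ) - 2)^2 / 4) ≤ μ₂) (hμ₂' : μ₂ < 0)
    (τp1 τp2 τm2 : ℝ)
    (hτp1 : τp1 = -((N:ℝ) - 2) / 2 + Real.sqrt (μ₁ + ((N:ℝ) - 2)^2 / 4))
    (hτp2 : τp2 = -((N:ℝ) - 2) / 2 + Real.sqrt (μ₂ + ((N:ℝ) - 2)^2 / 4))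
    (hτm2 : τm2 = -((N:ℝ) - 2) / 2 - Real.sqrt (μ₂ + ((N:ℝ) - 2)^2 / 4))
    (p q : ℝ) (hp : 1 < p) (hq : 1 < q)
    (hq1 : (2 - τp2) / (-τp1) < q) (hq2 : q < ((N:ℝ) + τp2) / (-τp1))
    (hc : 0 < τp1 * (p * q - 1) + 2 * p + 2)
    (τ1 τ2 : ℝ) (hτ2 : τ2 = q * τp1 + 2) (hτ1 : τ1 = p * τ2 + 2) :
    τm2 < τ2 ∧ τ2 < τp2 ∧ τp1 < τ1 := by
  have hN2 : (0:ℝ) < (N:ℝ) - 2 := by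
    have : (3:ℝ) ≤ (N:ℝ) := by exact_mod_cast hN
    linarith
  have hs1 : Real.sqrt (μ₁ + ((N:ℝ) - 2)^2 / 4) < ((N:ℝ) - 2) / 2 := by
    rw [show ((N:ℝ) - 2) / 2 = Real.sqrt ((((N:ℝ) - 2) / 2)^2) by
      rw [Real.sqrt_sq (by linarith)]]
    apply Real.sqrt_lt_sqrt (by linarith)
    nlinarith
  have hτp1neg : τp1 < 0 := by rw [hτp1]; linarith
  have hpos : 0 < -τp1 := by linarith
  have h1 : 2 - τp2 < q * (-τp1) := (div_lt_iff₀ hpos).mp hq1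
  have h2 : q * (-τp1) < (N:ℝ) + τp2 := (lt_div_iff₀ hpos).mp hq2
  have hsum : τm2 + τp2 = -((N:ℝ) - 2) := by rw [hτm2, hτp2]; ring
  refine ⟨by nlinarith, by nlinarith, by nlinarith⟩
end
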